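/- For atomless probability measures μ, ν on ℝ with finite second moments and quantile functions Q_μ, Q_ν, we have W_2(μ,ν)² = ∫₀¹ (Q_μ(t) - Q_ν(t))² dt. Consequently, for any finite collection m₁,…,m_L of such measures with weights λᵢ ≥ 0 summing to 1, the measure with quantile function Σᵢ λᵢ Q_{mᵢ} minimizes m̄ ↦ Σᵢ λᵢ W_2(mᵢ, m̄)² over all probability measures m̄ on ℝ with finite second moment. -/

import Mathlib

/-!
The quantile map pushes the uniform distribution on `(0,1)` forward to `μ`, so
`t ↦ (Q_μ t, Q_ν t)` is a coupling of `μ` and `ν`; its joint distribution function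
`min (F_μ a) (F_ν b)` is the largest one a coupling can have. Since `(x - y)²` is the area of the
square `[min x y, max x y)²`, Tonelli turns the transport cost of a coupling `γ` into
`∫∫ γ (Iic s ×ˢ Ioi u ∪ Ioi u ×ˢ Iic s)` over `(s, u) = (min a b, max a b)`, and each of these
two corner masses is a marginal mass minus a value of the joint distribution function, hence
smallest for the quantile coupling. The barycenter property then holds pointwise in `t`: a
weighted mean minimizes the weighted sum of squared deviations.
-/

open MeasureTheory ProbabilityTheory Filter

/-- Squared 2-Wasserstein distance, defined as the infimum of the quadratic
transport cost over all couplings. -/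
noncomputable def W2sq {E : Type*} [NormedAddCommGroup E] [MeasurableSpace E]
    (μ ν : Measure E) : ℝ :=
  sInf ((fun γ : Measure (E × E) => ∫ p, ‖p.1 - p.2‖ ^ 2 ∂γ) ''
    {γ | γ.map Prod.fst = μ ∧ γ.map Prod.snd = ν})

/-- Quantile (right-continuous inverse of the CDF) of a measure on ℝ. -/
noncomputable def quantile (μ : Measure ℝ) (t : ℝ) : ℝ :=
  sInf {x | t ≤ ProbabilityTheory.cdf μ x}

open Set

lemma volume_Iic_inter_Ioo_zero_one {c : ℝ} (h1 : c ≤ 1) :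
    volume (Iic c ∩ Ioo 0 1) = ENNReal.ofReal c := by
  rw [measure_congr ((ae_eq_refl (Iic c)).inter Ioo_ae_eq_Ioc), Iic_inter_Ioc_of_le h1,
    Real.volume_Ioc, sub_zero]

section Quantile

variable (μ : Measure ℝ) {t : ℝ}

lemma nonempty_le_cdf (ht : t < 1) : {x | t ≤ cdf μ x}.Nonempty :=
  (((tendsto_cdf_atTop μ).eventually (eventually_gt_nhds ht)).exists).imp fun _ h => h.le

lemma bddBelow_le_cdf (ht : 0 < t) : BddBelow {x | t ≤ cdf μ x} := by
  obtain ⟨x, hx⟩ := ((tendsto_cdf_atBot μ).eventually (eventually_lt_nhds ht)).exists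
  exact ⟨x, fun z hz => le_of_not_gt fun hzx => (hz.trans (monotone_cdf μ hzx.le)).not_gt hx⟩

lemma le_cdf_quantile (h1 : t < 1) : t ≤ cdf μ (quantile μ t) := by
  have hright : ∀ y > quantile μ t, t ≤ cdf μ y := fun y hy => by
    obtain ⟨z, hz, hzy⟩ := exists_lt_of_csInf_lt (nonempty_le_cdf μ h1) hy
    exact hz.trans (monotone_cdf μ hzy.le)
  exact ge_of_tendsto
    ((cdf μ).right_continuous _ |>.mono_left (nhdsWithin_mono _ Ioi_subset_Ici_self))
    (eventually_nhdsWithin_of_forall hright)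

lemma quantile_le_iff (h0 : 0 < t) (h1 : t < 1) {x : ℝ} :
    quantile μ t ≤ x ↔ t ≤ cdf μ x :=
  ⟨fun h => (le_cdf_quantile μ h1).trans (monotone_cdf μ h),
    fun h => csInf_le (bddBelow_le_cdf μ h0) h⟩

lemma monotoneOn_quantile : MonotoneOn (quantile μ) (Ioo 0 1) :=
  fun _ h₁ _ h₂ h => csInf_le_csInf (bddBelow_le_cdf μ h₁.1) (nonempty_le_cdf μ h₂.2)
    fun _ hx => h.trans hx

lemma aemeasurable_quantile : AEMeasurable (quantile μ) (volume.restrict (Ioo 0 1)) :=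
  aemeasurable_restrict_of_monotoneOn measurableSet_Ioo (monotoneOn_quantile μ)

lemma preimage_quantile_Iic_inter (x : ℝ) :
    quantile μ ⁻¹' Iic x ∩ Ioo 0 1 = Iic (cdf μ x) ∩ Ioo 0 1 := by
  ext t
  simp only [mem_inter_iff, mem_preimage, mem_Iic, mem_Ioo]
  exact ⟨fun ⟨h, ht⟩ => ⟨(quantile_le_iff μ ht.1 ht.2).1 h, ht⟩,
    fun ⟨h, ht⟩ => ⟨(quantile_le_iff μ ht.1 ht.2).2 h, ht⟩⟩

lemma map_quantile [IsProbabilityMeasure μ] : (volume.restrict (Ioo 0 1)).map (quantile μ) = μ := by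
  have : IsProbabilityMeasure (volume.restrict (Ioo (0 : ℝ) 1)) := ⟨by simp⟩
  have := Measure.isProbabilityMeasure_map (aemeasurable_quantile μ)
  refine Measure.ext_of_Iic _ _ fun x => ?_
  rw [Measure.map_apply_of_aemeasurable (aemeasurable_quantile μ) measurableSet_Iic,
    Measure.restrict_apply' measurableSet_Ioo, preimage_quantile_Iic_inter,
    volume_Iic_inter_Ioo_zero_one (cdf_le_one μ x), ofReal_cdf]

end Quantile

structure IsCoupling (γ : Measure (ℝ × ℝ)) (μ ν : Measure ℝ) : Prop where
  map_fst : γ.map Prod.fst = μ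
  map_snd : γ.map Prod.snd = ν

namespace IsCoupling

variable {γ : Measure (ℝ × ℝ)} {μ ν : Measure ℝ}

lemma isProbabilityMeasure [IsProbabilityMeasure μ] (hγ : IsCoupling γ μ ν) :
    IsProbabilityMeasure γ :=
  have : IsProbabilityMeasure (γ.map Prod.fst) := hγ.map_fst ▸ ‹_›
  Measure.isProbabilityMeasure_of_map Prod.fst

lemma measure_Iic_prod_univ (hγ : IsCoupling γ μ ν) (a : ℝ) :
    γ (Iic a ×ˢ univ) = μ (Iic a) := by
  rw [← hγ.map_fst, Measure.map_apply measurable_fst measurableSet_Iic, prod_univ]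

lemma measure_univ_prod_Iic (hγ : IsCoupling γ μ ν) (b : ℝ) :
    γ (univ ×ˢ Iic b) = ν (Iic b) := by
  rw [← hγ.map_snd, Measure.map_apply measurable_snd measurableSet_Iic, univ_prod]

lemma measure_Iic_prod_Iic_le (hγ : IsCoupling γ μ ν) (a b : ℝ) :
    γ (Iic a ×ˢ Iic b) ≤ min (μ (Iic a)) (ν (Iic b)) :=
  le_min (hγ.measure_Iic_prod_univ a ▸ measure_mono (prod_mono_right (subset_univ _)))
    (hγ.measure_univ_prod_Iic b ▸ measure_mono (prod_mono_left (subset_univ _)))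

lemma measure_Iic_prod_Ioi [IsFiniteMeasure γ] (hγ : IsCoupling γ μ ν) (s u : ℝ) :
    γ (Iic s ×ˢ Ioi u) = μ (Iic s) - γ (Iic s ×ˢ Iic u) := by
  rw [← hγ.measure_Iic_prod_univ, ← measure_sdiff (prod_mono_right (subset_univ _))
    (measurableSet_Iic.prod measurableSet_Iic).nullMeasurableSet (measure_ne_top _ _),
    prod_sdiff_prod, sdiff_self, empty_prod, union_empty, ← compl_eq_univ_sdiff, compl_Iic]

lemma measure_Ioi_prod_Iic [IsFiniteMeasure γ] (hγ : IsCoupling γ μ ν) (s u : ℝ) :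
    γ (Ioi u ×ˢ Iic s) = ν (Iic s) - γ (Iic u ×ˢ Iic s) := by
  rw [← hγ.measure_univ_prod_Iic, ← measure_sdiff (prod_mono_left (subset_univ _))
    (measurableSet_Iic.prod measurableSet_Iic).nullMeasurableSet (measure_ne_top _ _),
    prod_sdiff_prod, sdiff_self, prod_empty, empty_union, ← compl_eq_univ_sdiff, compl_Iic]

lemma integrable_sq_sub (hγ : IsCoupling γ μ ν) (hμ2 : Integrable (fun x => x ^ 2) μ)
    (hν2 : Integrable (fun x => x ^ 2) ν) : Integrable (fun p : ℝ × ℝ => (p.1 - p.2) ^ 2) γ := by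
  have h1 : Integrable (fun p : ℝ × ℝ => p.1 ^ 2) γ :=
    (integrable_map_measure (by fun_prop) measurable_fst.aemeasurable).1 (hγ.map_fst ▸ hμ2)
  have h2 : Integrable (fun p : ℝ × ℝ => p.2 ^ 2) γ :=
    (integrable_map_measure (by fun_prop) measurable_snd.aemeasurable).1 (hγ.map_snd ▸ hν2)
  refine ((h1.const_mul 2).add (h2.const_mul 2)).mono' (by fun_prop)
    (Eventually.of_forall fun p => ?_)
  rw [Real.norm_of_nonneg (sq_nonneg _), Pi.add_apply]
  nlinarith [sq_nonneg (p.1 + p.2)]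

end IsCoupling

noncomputable def quantileCoupling (μ ν : Measure ℝ) : Measure (ℝ × ℝ) :=
  (volume.restrict (Ioo 0 1)).map fun t => (quantile μ t, quantile ν t)

section QuantileCoupling

variable (μ ν : Measure ℝ)

lemma aemeasurable_quantile_prod :
    AEMeasurable (fun t => (quantile μ t, quantile ν t)) (volume.restrict (Ioo 0 1)) :=
  (aemeasurable_quantile μ).prodMk (aemeasurable_quantile ν)

lemma integral_quantileCoupling :
    ∫ p, (p.1 - p.2) ^ 2 ∂(quantileCoupling μ ν) =
      ∫ t in Ioo 0 1, (quantile μ t - quantile ν t) ^ 2 :=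
  integral_map (aemeasurable_quantile_prod μ ν) (by fun_prop)

variable [IsProbabilityMeasure μ] [IsProbabilityMeasure ν]

lemma isCoupling_quantileCoupling : IsCoupling (quantileCoupling μ ν) μ ν where
  map_fst := by
    rw [quantileCoupling, AEMeasurable.map_map_of_aemeasurable measurable_fst.aemeasurable
      (aemeasurable_quantile_prod μ ν)]
    exact map_quantile μ
  map_snd := by
    rw [quantileCoupling, AEMeasurable.map_map_of_aemeasurable measurable_snd.aemeasurable
      (aemeasurable_quantile_prod μ ν)]
    exact map_quantile ν

instance : IsProbabilityMeasure (quantileCoupling μ ν) :=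
  (isCoupling_quantileCoupling μ ν).isProbabilityMeasure

lemma quantileCoupling_Iic_prod_Iic (a b : ℝ) :
    quantileCoupling μ ν (Iic a ×ˢ Iic b) = min (μ (Iic a)) (ν (Iic b)) := by
  have hset : (fun t => (quantile μ t, quantile ν t)) ⁻¹' (Iic a ×ˢ Iic b) ∩ Ioo 0 1 =
      Iic (min (cdf μ a) (cdf ν b)) ∩ Ioo 0 1 := by
    rw [mk_preimage_prod, inter_inter_distrib_right, preimage_quantile_Iic_inter,
      preimage_quantile_Iic_inter, ← inter_inter_distrib_right, Iic_inter_Iic]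
  rw [quantileCoupling, Measure.map_apply_of_aemeasurable (aemeasurable_quantile_prod μ ν)
    (measurableSet_Iic.prod measurableSet_Iic), Measure.restrict_apply' measurableSet_Ioo, hset,
    volume_Iic_inter_Ioo_zero_one (min_le_of_left_le (cdf_le_one μ a)),
    ← ofReal_cdf, ← ofReal_cdf, ENNReal.ofReal_min]

end QuantileCoupling

noncomputable def gapSquare (p : ℝ × ℝ) : Set (ℝ × ℝ) :=
  Ico (min p.1 p.2) (max p.1 p.2) ×ˢ Ico (min p.1 p.2) (max p.1 p.2)

lemma volume_gapSquare (p : ℝ × ℝ) : volume (gapSquare p) = ENNReal.ofReal ((p.1 - p.2) ^ 2) := by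
  rw [gapSquare, Measure.volume_eq_prod, Measure.prod_prod, Real.volume_Ico,
    ← ENNReal.ofReal_mul (sub_nonneg.2 min_le_max), max_sub_min_eq_abs', ← sq, sq_abs]

lemma measurableSet_setOf_mem_gapSquare :
    MeasurableSet {z : (ℝ × ℝ) × ℝ × ℝ | z.2 ∈ gapSquare z.1} := by
  simp only [gapSquare, mem_prod, mem_Ico, ofPred_and]
  refine ((measurableSet_le ?_ ?_).inter (measurableSet_lt ?_ ?_)).inter
    ((measurableSet_le ?_ ?_).inter (measurableSet_lt ?_ ?_)) <;> fun_prop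

lemma setOf_mem_gapSquare (a b : ℝ) : {p | (a, b) ∈ gapSquare p} =
    Iic (min a b) ×ˢ Ioi (max a b) ∪ Ioi (max a b) ×ˢ Iic (min a b) := by
  ext ⟨x, y⟩
  simp only [gapSquare, mem_ofPred_eq, mem_prod, mem_Ico, mem_union, mem_Iic, mem_Ioi]
  grind

lemma lintegral_ofReal_sq_sub (γ : Measure (ℝ × ℝ)) [SFinite γ] :
    ∫⁻ p, ENNReal.ofReal ((p.1 - p.2) ^ 2) ∂γ = ∫⁻ q, γ {p | q ∈ gapSquare p} := by
  have hS := measurableSet_setOf_mem_gapSquare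
  calc ∫⁻ p, ENNReal.ofReal ((p.1 - p.2) ^ 2) ∂γ
      = ∫⁻ p, volume (Prod.mk p ⁻¹' _) ∂γ := lintegral_congr fun p => (volume_gapSquare p).symm
    _ = _ := by rw [← Measure.prod_apply hS, Measure.prod_apply_symm hS]; rfl

section Optimality

variable {γ : Measure (ℝ × ℝ)} {μ ν : Measure ℝ} [IsProbabilityMeasure μ] [IsProbabilityMeasure ν]

lemma IsCoupling.quantileCoupling_corners_le [IsFiniteMeasure γ] (hγ : IsCoupling γ μ ν)
    {s u : ℝ} (hsu : s ≤ u) : quantileCoupling μ ν (Iic s ×ˢ Ioi u ∪ Ioi u ×ˢ Iic s) ≤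
      γ (Iic s ×ˢ Ioi u ∪ Ioi u ×ˢ Iic s) := by
  have hdisj : Disjoint (Iic s ×ˢ Ioi u) (Ioi u ×ˢ Iic s) :=
    disjoint_left.2 fun p hp hp' => (hp.1.trans hsu).not_gt hp'.1
  have hq := isCoupling_quantileCoupling μ ν
  simp only [measure_union hdisj (measurableSet_Ioi.prod measurableSet_Iic),
    hq.measure_Iic_prod_Ioi, hq.measure_Ioi_prod_Iic, hγ.measure_Iic_prod_Ioi,
    hγ.measure_Ioi_prod_Iic, quantileCoupling_Iic_prod_Iic]
  gcongr
  · exact hγ.measure_Iic_prod_Iic_le s u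
  · exact hγ.measure_Iic_prod_Iic_le u s

lemma IsCoupling.lintegral_quantileCoupling_le (hγ : IsCoupling γ μ ν) :
    ∫⁻ p, ENNReal.ofReal ((p.1 - p.2) ^ 2) ∂(quantileCoupling μ ν) ≤
      ∫⁻ p, ENNReal.ofReal ((p.1 - p.2) ^ 2) ∂γ := by
  have := hγ.isProbabilityMeasure
  simp only [lintegral_ofReal_sq_sub, setOf_mem_gapSquare]
  exact lintegral_mono fun q => hγ.quantileCoupling_corners_le min_le_max

lemma IsCoupling.integral_quantileCoupling_le (hγ : IsCoupling γ μ ν)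
    (hμ2 : Integrable (fun x => x ^ 2) μ) (hν2 : Integrable (fun x => x ^ 2) ν) :
    ∫ p, (p.1 - p.2) ^ 2 ∂(quantileCoupling μ ν) ≤ ∫ p, (p.1 - p.2) ^ 2 ∂γ := by
  have hnonneg : ∀ γ' : Measure (ℝ × ℝ), 0 ≤ᵐ[γ'] fun p => (p.1 - p.2) ^ 2 :=
    fun _ => Eventually.of_forall fun _ => sq_nonneg _
  rw [integral_eq_lintegral_of_nonneg_ae (hnonneg _) (by fun_prop),
    integral_eq_lintegral_of_nonneg_ae (hnonneg _) (by fun_prop)]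
  exact ENNReal.toReal_mono (hγ.integrable_sq_sub hμ2 hν2).lintegral_lt_top.ne
    hγ.lintegral_quantileCoupling_le

end Optimality

section Wasserstein

variable {μ ν : Measure ℝ} [IsProbabilityMeasure μ] [IsProbabilityMeasure ν]

lemma integrable_sq_sub_quantile (hμ2 : Integrable (fun x => x ^ 2) μ)
    (hν2 : Integrable (fun x => x ^ 2) ν) :
    Integrable (fun t => (quantile μ t - quantile ν t) ^ 2) (volume.restrict (Ioo 0 1)) :=
  (integrable_map_measure (by fun_prop) (aemeasurable_quantile_prod μ ν)).1
    ((isCoupling_quantileCoupling μ ν).integrable_sq_sub hμ2 hν2)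

theorem W2sq_eq_integral_quantile (hμ2 : Integrable (fun x => x ^ 2) μ)
    (hν2 : Integrable (fun x => x ^ 2) ν) :
    W2sq μ ν = ∫ t in Ioo 0 1, (quantile μ t - quantile ν t) ^ 2 := by
  have hq := isCoupling_quantileCoupling μ ν
  simp only [W2sq, Real.norm_eq_abs, sq_abs]
  rw [← integral_quantileCoupling]
  refine IsLeast.csInf_eq ⟨⟨_, ⟨hq.map_fst, hq.map_snd⟩, rfl⟩, ?_⟩
  rintro _ ⟨γ, ⟨h1, h2⟩, rfl⟩
  exact (IsCoupling.mk h1 h2).integral_quantileCoupling_le hμ2 hν2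

end Wasserstein

lemma Finset.sum_mul_sq_sub_weightedMean_le {ι : Type*} (s : Finset ι) (w a : ι → ℝ)
    (hw : ∑ i ∈ s, w i = 1) (c : ℝ) :
    ∑ i ∈ s, w i * (a i - ∑ j ∈ s, w j * a j) ^ 2 ≤ ∑ i ∈ s, w i * (a i - c) ^ 2 := by
  have expand (d : ℝ) : ∑ i ∈ s, w i * (a i - d) ^ 2 =
      ∑ i ∈ s, w i * a i ^ 2 - 2 * d * ∑ i ∈ s, w i * a i + d ^ 2 := by
    have hterm (i : ι) :
        w i * (a i - d) ^ 2 = w i * a i ^ 2 - 2 * d * (w i * a i) + d ^ 2 * w i := by ring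
    simp only [hterm, Finset.sum_add_distrib, Finset.sum_sub_distrib, ← Finset.mul_sum, hw,
      mul_one]
  rw [expand, expand]
  nlinarith [sq_nonneg (∑ j ∈ s, w j * a j - c)]

lemma sum_mul_W2sq_eq {ι : Type*} [Fintype ι] (w : ι → ℝ) (m : ι → Measure ℝ)
    [∀ i, IsProbabilityMeasure (m i)] (hm2 : ∀ i, Integrable (fun x => x ^ 2) (m i))
    {ν : Measure ℝ} [IsProbabilityMeasure ν] (hν2 : Integrable (fun x => x ^ 2) ν) :
    ∑ i, w i * W2sq (m i) ν =
      ∫ t in Ioo 0 1, ∑ i, w i * (quantile (m i) t - quantile ν t) ^ 2 := by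
  rw [integral_finsetSum _ fun i _ => (integrable_sq_sub_quantile (hm2 i) hν2).const_mul (w i)]
  simp only [W2sq_eq_integral_quantile (hm2 _) hν2, integral_const_mul]

theorem quantile_representation_and_barycenter_general
    (μ ν : Measure ℝ) [IsProbabilityMeasure μ] [IsProbabilityMeasure ν]
    (hμ2 : Integrable (fun x => x ^ 2) μ) (hν2 : Integrable (fun x => x ^ 2) ν)
    (L : ℕ) (m : Fin L → Measure ℝ) (w : Fin L → ℝ)
    (hm : ∀ i, IsProbabilityMeasure (m i))
    (hm2 : ∀ i, Integrable (fun x => x ^ 2) (m i))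
    (hw1 : ∑ i, w i = 1)
    (mhat : Measure ℝ) [IsProbabilityMeasure mhat]
    (hhat2 : Integrable (fun x => x ^ 2) mhat)
    (hq : ∀ t ∈ Set.Ioo (0:ℝ) 1, quantile mhat t = ∑ i, w i * quantile (m i) t) :
    (W2sq μ ν = ∫ t in Set.Ioo (0:ℝ) 1, (quantile μ t - quantile ν t) ^ 2) ∧
    (∀ (mbar : Measure ℝ), IsProbabilityMeasure mbar →
      Integrable (fun x => x ^ 2) mbar →
      ∑ i, w i * W2sq (m i) mhat ≤ ∑ i, w i * W2sq (m i) mbar) := by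
  refine ⟨W2sq_eq_integral_quantile hμ2 hν2, fun mbar _ hbar2 => ?_⟩
  rw [sum_mul_W2sq_eq w m hm2 hhat2, sum_mul_W2sq_eq w m hm2 hbar2]
  refine integral_mono_ae
    (integrable_finsetSum _ fun i _ => (integrable_sq_sub_quantile (hm2 i) hhat2).const_mul _)
    (integrable_finsetSum _ fun i _ => (integrable_sq_sub_quantile (hm2 i) hbar2).const_mul _) ?_
  filter_upwards [ae_restrict_mem measurableSet_Ioo] with t ht
  rw [hq t ht]
  exact Finset.univ.sum_mul_sq_sub_weightedMean_le w _ hw1 _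

/-- on ℝ, `W₂²` is the `L²(0,1)` distance between quantile functions,
and the measure whose quantile function is the weighted average of quantile functions
is a 2-Wasserstein barycenter. -/
theorem quantile_representation_and_barycenter
    (μ ν : Measure ℝ) [IsProbabilityMeasure μ] [IsProbabilityMeasure ν]
    [NullSingletonClass μ] [NullSingletonClass ν]
    (hμ2 : Integrable (fun x => x ^ 2) μ) (hν2 : Integrable (fun x => x ^ 2) ν)
    (L : ℕ) (m : Fin L → Measure ℝ) (w : Fin L → ℝ)
    (hm : ∀ i, IsProbabilityMeasure (m i)) (hma : ∀ i, NullSingletonClass (m i))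
    (hm2 : ∀ i, Integrable (fun x => x ^ 2) (m i))
    (hw : ∀ i, 0 ≤ w i) (hw1 : ∑ i, w i = 1)
    (mhat : Measure ℝ) [IsProbabilityMeasure mhat]
    (hhat2 : Integrable (fun x => x ^ 2) mhat)
    (hq : ∀ t ∈ Set.Ioo (0:ℝ) 1, quantile mhat t = ∑ i, w i * quantile (m i) t) :
    (W2sq μ ν = ∫ t in Set.Ioo (0:ℝ) 1, (quantile μ t - quantile ν t) ^ 2) ∧
    (∀ (mbar : Measure ℝ), IsProbabilityMeasure mbar →
      Integrable (fun x => x ^ 2) mbar →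
      ∑ i, w i * W2sq (m i) mhat ≤ ∑ i, w i * W2sq (m i) mbar) :=
  quantile_representation_and_barycenter_general μ ν hμ2 hν2 L m w hm hm2 hw1 mhat hhat2 hq
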